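/- arXiv:1405.6374 — 2 statements merged into one kernel-verified Lean document; each statement's English description precedes it below -/
import Mathlib

section
/- A generic QMS is irreducible if and only if the associated classical Markov chain is irreducible; that is, the only subspaces of ℂ^d invariant under G and under every L_{ℓk} are {0} and ℂ^d if and only if for every pair of states ℓ ≠ k there exist n ≥ 0 and states j₁,…,j_n with γ_{ℓ j₁} γ_{j₁ j₂} ··· γ_{j_n k} > 0 (for n = 0 this means γ_{ℓk} > 0). -/
open Matrix

/-- Jump operators of a generic QMS: `L_{ℓk} = γ_{ℓk}^{1/2} |e_k⟩⟨e_ℓ|`. -/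
noncomputable def genL {d : ℕ} (γ : Fin d → Fin d → ℝ) (ℓ k : Fin d) :
    Matrix (Fin d) (Fin d) ℂ :=
  (Real.sqrt (γ ℓ k) : ℂ) • Matrix.single k ℓ 1

/-- `G = -(1/2)∑_{ℓ≠k} γ_{ℓk} |e_ℓ⟩⟨e_ℓ| - iH` for a generic QMS with real diagonal
Hamiltonian `H = diag(h)`. -/
noncomputable def genG {d : ℕ} (γ : Fin d → Fin d → ℝ) (h : Fin d → ℝ) :
    Matrix (Fin d) (Fin d) ℂ :=
  (-(1/2 : ℂ)) • (∑ ℓ, ∑ k, if ℓ ≠ k then (γ ℓ k : ℂ) • Matrix.single ℓ ℓ 1 else 0)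
    - Complex.I • Matrix.diagonal (fun j => (h j : ℂ))

/-- The product `γ_{ℓ j₁} γ_{j₁ j₂} ⋯ γ_{jₙ k}` of rates along the path
`ℓ → j₁ → ⋯ → jₙ → k`; for the empty path it is `γ_{ℓk}`. -/
noncomputable def pathProd {d : ℕ} (γ : Fin d → Fin d → ℝ) :
    Fin d → List (Fin d) → Fin d → ℝ
  | a, [], b => γ a b
  | a, j :: rest, b => γ a j * pathProd γ j rest b

/-! `L_{ab}` moves the `a`-th coordinate of a vector to the `b`-th one (scaled by `γ_{ab}^{1/2}`),
and `G` is diagonal. Hence an invariant subspace containing a vector with nonzero `a`-th coordinate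
contains `e_b` for every state `b` reachable from `a`, so it is all of `ℂ^d` when the chain is
irreducible; conversely, the coordinate subspace spanned by the states reachable from `ℓ` is
invariant, and proper when it misses some `k`. -/

open Relation

section

variable {d : ℕ} (γ : Fin d → Fin d → ℝ)

def jumpRel (a b : Fin d) : Prop := a ≠ b ∧ 0 < γ a b

variable {γ}

-- The diagonal rates `γ a a` are unconstrained and may occur in `pathProd`; they only give loops.
theorem reflTransGen_jumpRel_of_ne_zero (hγ : ∀ ℓ k : Fin d, ℓ ≠ k → 0 ≤ γ ℓ k) {a b : Fin d}
    (hab : γ a b ≠ 0) : ReflTransGen (jumpRel γ) a b := by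
  obtain rfl | hne := eq_or_ne a b
  · exact .refl
  · exact .single ⟨hne, (hγ a b hne).lt_of_ne' hab⟩

theorem reflTransGen_jumpRel_of_pathProd_ne_zero (hγ : ∀ ℓ k : Fin d, ℓ ≠ k → 0 ≤ γ ℓ k)
    {a b : Fin d} {l : List (Fin d)} (hl : pathProd γ a l b ≠ 0) :
    ReflTransGen (jumpRel γ) a b := by
  induction l generalizing a with
  | nil => exact reflTransGen_jumpRel_of_ne_zero hγ hl
  | cons j rest ih =>
    obtain ⟨haj, hjb⟩ := mul_ne_zero_iff.1 hl
    exact (reflTransGen_jumpRel_of_ne_zero hγ haj).trans (ih hjb)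

theorem exists_pathProd_pos_of_transGen {a b : Fin d} (hab : TransGen (jumpRel γ) a b) :
    ∃ l, 0 < pathProd γ a l b := by
  induction hab using TransGen.head_induction_on with
  | single hab => exact ⟨[], hab.2⟩
  | head hac _ ih =>
    obtain ⟨l, hl⟩ := ih
    exact ⟨_ :: l, mul_pos hac.2 hl⟩

theorem exists_pathProd_pos_iff_transGen (hγ : ∀ ℓ k : Fin d, ℓ ≠ k → 0 ≤ γ ℓ k) {a b : Fin d}
    (hab : a ≠ b) : (∃ l, 0 < pathProd γ a l b) ↔ TransGen (jumpRel γ) a b := by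
  refine ⟨fun ⟨l, hl⟩ => ?_, exists_pathProd_pos_of_transGen⟩
  obtain rfl | h := reflTransGen_iff_eq_or_transGen.1
    (reflTransGen_jumpRel_of_pathProd_ne_zero hγ hl.ne')
  exacts [absurd rfl hab, h]

theorem genL_mulVec (a b : Fin d) (v : Fin d → ℂ) :
    genL γ a b *ᵥ v = Pi.single b ((Real.sqrt (γ a b) : ℂ) * v a) := by
  ext i
  simp [genL, mulVec, dotProduct, Matrix.single, Pi.single_apply, ite_and, eq_comm]

theorem isDiag_genG (h : Fin d → ℝ) : (genG γ h).IsDiag := by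
  intro i j hij
  have hsingle : ∀ ℓ (c : ℂ), Matrix.single ℓ ℓ c i j = 0 := fun ℓ c => by
    rw [Matrix.single_apply, if_neg]
    rintro ⟨rfl, rfl⟩
    exact hij rfl
  simp [genG, Matrix.sum_apply, apply_ite (fun M : Matrix (Fin d) (Fin d) ℂ => M i j), hsingle,
    diagonal_apply_ne _ hij]

theorem Matrix.IsDiag.mulVec_mem_pi_bot {R ι : Type*} [CommSemiring R] [Fintype ι]
    [DecidableEq ι] {A : Matrix ι ι R} (hA : A.IsDiag) {I : Set ι} {v : ι → R}
    (hv : v ∈ Submodule.pi I fun _ => (⊥ : Submodule R R)) :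
    A *ᵥ v ∈ Submodule.pi I fun _ => (⊥ : Submodule R R) := by
  rw [← hA.diagonal_diag]
  intro i hi
  simp_all [mulVec_diagonal]

theorem genL_mulVec_mem_pi_bot {S : Set (Fin d)} (hS : ∀ a b, a ∈ S → jumpRel γ a b → b ∈ S)
    {a b : Fin d} (hab : a ≠ b) {v : Fin d → ℂ}
    (hv : v ∈ Submodule.pi Sᶜ fun _ => (⊥ : Submodule ℂ ℂ)) :
    genL γ a b *ᵥ v ∈ Submodule.pi Sᶜ fun _ => (⊥ : Submodule ℂ ℂ) := by
  rw [genL_mulVec]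
  intro j (hj : j ∉ S)
  obtain rfl | hjb := eq_or_ne j b
  · by_cases haS : a ∈ S
    · have hγab : γ a j ≤ 0 := not_lt.1 fun hpos => hj (hS a j haS ⟨hab, hpos⟩)
      simp [Real.sqrt_eq_zero'.2 hγab]
    · simp [show v a = 0 from hv a haS]
  · simp [Pi.single_eq_of_ne hjb]

theorem exists_invariant_ne_bot_ne_top (h : Fin d → ℝ) {ℓ k : Fin d} (hℓk : ℓ ≠ k)
    (hnot : ¬ TransGen (jumpRel γ) ℓ k) :
    ∃ V : Submodule ℂ (Fin d → ℂ), (∀ v ∈ V, genG γ h *ᵥ v ∈ V) ∧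
      (∀ a b : Fin d, a ≠ b → ∀ v ∈ V, genL γ a b *ᵥ v ∈ V) ∧ V ≠ ⊥ ∧ V ≠ ⊤ := by
  set S : Set (Fin d) := {b | ReflTransGen (jumpRel γ) ℓ b}
  have hkS : k ∉ S := fun hk =>
    (reflTransGen_iff_eq_or_transGen.1 hk).elim (fun e => hℓk e.symm) hnot
  refine ⟨Submodule.pi Sᶜ fun _ => ⊥, fun v => (isDiag_genG h).mulVec_mem_pi_bot,
    fun a b hab v => genL_mulVec_mem_pi_bot (fun a b ha hb => ReflTransGen.tail ha hb) hab,
    ?_, ?_⟩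
  · rw [Submodule.ne_bot_iff]
    refine ⟨Pi.single ℓ 1, fun j (hj : j ∉ S) => ?_, by simp⟩
    have hjℓ : j ≠ ℓ := by rintro rfl; exact hj .refl
    simp [Pi.single_eq_of_ne hjℓ]
  · intro htop
    have hk : (Pi.single k 1 : Fin d → ℂ) ∈ Submodule.pi Sᶜ fun _ => ⊥ := htop ▸ Submodule.mem_top
    simpa using hk k hkS

theorem Submodule.eq_top_of_single_mem {K ι : Type*} [Field K] [Fintype ι] [DecidableEq ι]
    {V : Submodule K (ι → K)} {v : ι → K} (hv : v ∈ V) {a : ι} (hva : v a ≠ 0)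
    (hsingle : ∀ k ≠ a, ∀ c, Pi.single k c ∈ V) : V = ⊤ := by
  have hsingle_a : Pi.single a (v a) ∈ V := by
    have hv' : v = Pi.single a (v a) + ∑ k ∈ Finset.univ.erase a, Pi.single k (v k) := by
      rw [Finset.add_sum_erase _ (fun k => Pi.single k (v k)) (Finset.mem_univ a),
        Finset.univ_sum_single]
    rw [eq_sub_of_add_eq hv'.symm]
    exact V.sub_mem hv (V.sum_mem fun k hk => hsingle k (Finset.ne_of_mem_erase hk) _)
  have hsingle_all : ∀ k c, Pi.single k c ∈ V := by
    intro k c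
    obtain rfl | hka := eq_or_ne k a
    · simpa [← Pi.single_smul', div_mul_cancel₀ c hva] using V.smul_mem (c / v k) hsingle_a
    · exact hsingle k hka c
  refine eq_top_iff.2 fun w _ => ?_
  rw [← Finset.univ_sum_single w]
  exact V.sum_mem fun k _ => hsingle_all k _

variable {V : Submodule ℂ (Fin d → ℂ)}

theorem single_mem_of_jumpRel
    (hL : ∀ a b : Fin d, a ≠ b → ∀ v ∈ V, genL γ a b *ᵥ v ∈ V) {v : Fin d → ℂ} (hv : v ∈ V)
    {a b : Fin d} (hva : v a ≠ 0)
    (hab : jumpRel γ a b) (c : ℂ) : Pi.single b c ∈ V := by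
  have hx : (Real.sqrt (γ a b) : ℂ) * v a ≠ 0 :=
    mul_ne_zero (by exact_mod_cast (Real.sqrt_pos.2 hab.2).ne') hva
  have hmem := V.smul_mem (c / ((Real.sqrt (γ a b) : ℂ) * v a)) (hL a b hab.1 v hv)
  rwa [genL_mulVec, ← Pi.single_smul', smul_eq_mul, div_mul_cancel₀ c hx] at hmem

theorem single_mem_of_transGen
    (hL : ∀ a b : Fin d, a ≠ b → ∀ v ∈ V, genL γ a b *ᵥ v ∈ V) {v : Fin d → ℂ} (hv : v ∈ V)
    {a b : Fin d} (hva : v a ≠ 0)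
    (hab : TransGen (jumpRel γ) a b) (c : ℂ) : Pi.single b c ∈ V := by
  induction hab generalizing c with
  | single hab => exact single_mem_of_jumpRel hL hv hva hab c
  | tail _ hjump ih => exact single_mem_of_jumpRel hL (ih 1) (by simp) hjump c

theorem eq_top_of_genL_invariant
    (hL : ∀ a b : Fin d, a ≠ b → ∀ v ∈ V, genL γ a b *ᵥ v ∈ V)
    (hchain : ∀ ℓ k : Fin d, ℓ ≠ k → TransGen (jumpRel γ) ℓ k) (hV : V ≠ ⊥) : V = ⊤ := by
  obtain ⟨v, hv, hv0⟩ := (Submodule.ne_bot_iff V).1 hV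
  obtain ⟨a, hva⟩ := Function.ne_iff.1 hv0
  exact Submodule.eq_top_of_single_mem hv hva fun k hka =>
    single_mem_of_transGen hL hv hva (hchain a k hka.symm)

end

theorem generic_irreducible_iff_chain_irreducible_general {d : ℕ}
    (γ : Fin d → Fin d → ℝ) (hγ : ∀ ℓ k : Fin d, ℓ ≠ k → 0 ≤ γ ℓ k)
    (h : Fin d → ℝ) :
    (∀ V : Submodule ℂ (Fin d → ℂ),
        (∀ v ∈ V, genG γ h *ᵥ v ∈ V) →
        (∀ ℓ k : Fin d, ℓ ≠ k → ∀ v ∈ V, genL γ ℓ k *ᵥ v ∈ V) → V = ⊥ ∨ V = ⊤)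
      ↔ (∀ ℓ k : Fin d, ℓ ≠ k → ∃ l : List (Fin d), 0 < pathProd γ ℓ l k) := by
  rw [show (∀ ℓ k : Fin d, ℓ ≠ k → ∃ l, 0 < pathProd γ ℓ l k) ↔
      ∀ ℓ k : Fin d, ℓ ≠ k → TransGen (jumpRel γ) ℓ k from
    forall₂_congr fun ℓ k => forall_congr' (exists_pathProd_pos_iff_transGen hγ)]
  constructor
  · intro hirr ℓ k hℓk
    by_contra hnot
    obtain ⟨V, hG, hL, hbot, htop⟩ := exists_invariant_ne_bot_ne_top h hℓk hnot
    exact (hirr V hG hL).elim hbot htop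
  · intro hchain V _ hL
    exact or_iff_not_imp_left.2 (eq_top_of_genL_invariant hL hchain)

/-- a generic QMS is irreducible iff the associated classical Markov
chain is irreducible: the only subspaces of `ℂ^d` invariant under `G` and every
`L_{ℓk}` are `{0}` and `ℂ^d` iff for all `ℓ ≠ k` there is a path `ℓ → j₁ → ⋯ → jₙ → k`
with `γ_{ℓ j₁} γ_{j₁ j₂} ⋯ γ_{jₙ k} > 0`. -/
theorem generic_irreducible_iff_chain_irreducible {d : ℕ} (hd : 2 ≤ d)
    (γ : Fin d → Fin d → ℝ) (hγ : ∀ ℓ k : Fin d, ℓ ≠ k → 0 ≤ γ ℓ k)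
    (h : Fin d → ℝ) :
    (∀ V : Submodule ℂ (Fin d → ℂ),
        (∀ v ∈ V, genG γ h *ᵥ v ∈ V) →
        (∀ ℓ k : Fin d, ℓ ≠ k → ∀ v ∈ V, genL γ ℓ k *ᵥ v ∈ V) → V = ⊥ ∨ V = ⊤)
      ↔ (∀ ℓ k : Fin d, ℓ ≠ k → ∃ l : List (Fin d), 0 < pathProd γ ℓ l k) :=
  generic_irreducible_iff_chain_irreducible_general γ hγ h
end

section
/- Let L = [[0,1,0],[−1,0,0],[0,0,0]], G = [[−1/2,0,−1],[0,−1/2,0],[1,0,0]] and G̃ = G − (1/2)L² in M₃(ℂ), and let e₁, e₂, e₃ be the standard basis of ℂ³. Then for each k ∈ {1,2,3}, the linear span of the set {A e_k : A in the Lie subalgebra of M₃(ℂ) generated by G̃ and L} is two-dimensional (it equals the span of the two standard basis vectors other than e_k); in particular the Lie algebra rank condition fails for this GKSL datum even though the associated QMS is irreducible. -/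
open Matrix

attribute [local instance 100] LieRing.ofAssociativeRing

/-!
`G̃ = E₃₁ - E₁₃` and `L = E₁₂ - E₂₁` (`skewSingle 2 0` and `skewSingle 0 1` with `Fin 3`
indices) are two infinitesimal rotations, and together with their bracket `E₃₂ - E₂₃` they span
`so(3)`, the skew-symmetric matrices. A skew-symmetric matrix has zero diagonal, so `A e_k` never
has an `e_k`-component, while `E_ik - E_ki` sends `e_k` to `e_i`. For irreducibility, a subspace
invariant under `G` and `L` is invariant under `G̃ = G - ½ L²`, hence under `so(3)`; two rotations
carry any nonzero vector to a multiple of a basis vector, and rotations carry basis vectors to one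
another.
-/

open LieAlgebra.Orthogonal Submodule

lemma span_single_ne_eq_ker_proj {n K : Type*} [Fintype n] [DecidableEq n] [Semiring K] (k : n) :
    span K {v | ∃ i, i ≠ k ∧ v = (Pi.single i 1 : n → K)} = LinearMap.ker (LinearMap.proj k) := by
  apply le_antisymm
  · rw [span_le]
    rintro _ ⟨i, hik, rfl⟩
    simp [Pi.single_eq_of_ne' hik]
  · intro v hv
    rw [LinearMap.mem_ker, LinearMap.proj_apply] at hv
    rw [← Finset.univ_sum_single v]
    refine sum_mem fun i _ => ?_
    rcases eq_or_ne i k with rfl | hik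
    · simp [hv]
    · rw [← mul_one (v i), ← smul_eq_mul, Pi.single_smul]
      exact smul_mem _ _ (subset_span ⟨i, hik, rfl⟩)

lemma finrank_ker_proj {n K : Type*} [Fintype n] [Field K] (k : n) :
    Module.finrank K (LinearMap.ker (LinearMap.proj k : (n → K) →ₗ[K] K)) = Fintype.card n - 1 := by
  have h := LinearMap.finrank_range_add_finrank_ker (LinearMap.proj k : (n → K) →ₗ[K] K)
  rw [LinearMap.range_eq_top.2 (LinearMap.proj_surjective k), finrank_top, Module.finrank_self,
    Module.finrank_fintype_fun_eq_card] at h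
  omega

namespace Matrix

variable {n K : Type*} [Fintype n] [DecidableEq n]

section CommRing

variable [CommRing K]

def skewSingle (i j : n) : Matrix n n K := single i j 1 - single j i 1

lemma skewSingle_mem_so (i j : n) : skewSingle i j ∈ so n K := by
  rw [mem_so, skewSingle, transpose_sub, transpose_single, transpose_single, neg_sub]

lemma skewSingle_mulVec (i j : n) (v : n → K) :
    skewSingle i j *ᵥ v = Pi.single i (v j) - Pi.single j (v i) := by
  simp [skewSingle, sub_mulVec, single_mulVec, Pi.single]

lemma skewSingle_mulVec_single {i j : n} (hij : i ≠ j) :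
    skewSingle i j *ᵥ Pi.single j 1 = (Pi.single i 1 : n → K) := by
  rw [skewSingle_mulVec]
  simp [hij]

lemma lie_skewSingle {i j k : n} (hij : i ≠ j) (hik : i ≠ k) (hjk : j ≠ k) :
    ⁅(skewSingle i j : Matrix n n K), skewSingle j k⁆ = (skewSingle i k : Matrix n n K) := by
  simp [Ring.lie_def, skewSingle, sub_mul, mul_sub, hij, hik, hjk, hij.symm, hik.symm, hjk.symm]

def mulVecStabilizer (V : Submodule K (n → K)) : Subalgebra K (Matrix n n K) where
  carrier := {A | ∀ v ∈ V, A *ᵥ v ∈ V}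
  mul_mem' hA hB v hv := by
    rw [← mulVec_mulVec]
    exact hA _ (hB v hv)
  add_mem' hA hB v hv := by
    rw [add_mulVec]
    exact V.add_mem (hA v hv) (hB v hv)
  algebraMap_mem' c v hv := by
    rw [Algebra.algebraMap_eq_smul_one, smul_mulVec, one_mulVec]
    exact V.smul_mem c hv

lemma mulVec_mem_of_mem_lieSpan {V : Submodule K (n → K)} {s : Set (Matrix n n K)}
    (hs : ∀ A ∈ s, ∀ v ∈ V, A *ᵥ v ∈ V) {A : Matrix n n K}
    (hA : A ∈ LieSubalgebra.lieSpan K (Matrix n n K) s) : ∀ v ∈ V, A *ᵥ v ∈ V :=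
  LieSubalgebra.lieSpan_le (K := lieSubalgebraOfSubalgebra K _ (mulVecStabilizer V)) |>.2 hs hA

end CommRing

section Field

variable [Field K]

lemma apply_self_eq_zero_of_mem_so [NeZero (2 : K)] {A : Matrix n n K} (hA : A ∈ so n K) (i : n) :
    A i i = 0 := by
  have h := congrFun (congrFun ((mem_so _ _ A).1 hA) i) i
  rw [transpose_apply, neg_apply, eq_neg_iff_add_eq_zero, ← two_mul] at h
  exact (mul_eq_zero.1 h).resolve_left two_ne_zero

lemma span_so_mulVec_single [NeZero (2 : K)] (k : n) :
    span K {v | ∃ A ∈ so n K, v = A *ᵥ Pi.single k 1} = LinearMap.ker (LinearMap.proj k) := by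
  apply le_antisymm
  · rw [span_le]
    rintro _ ⟨A, hA, rfl⟩
    simp [apply_self_eq_zero_of_mem_so hA]
  · rw [← span_single_ne_eq_ker_proj, span_le]
    rintro _ ⟨i, hik, rfl⟩
    exact subset_span ⟨_, skewSingle_mem_so i k, (skewSingle_mulVec_single hik).symm⟩

lemma eq_top_of_single_mem_of_so_invariant {V : Submodule K (n → K)}
    (hV : ∀ A ∈ so n K, ∀ v ∈ V, A *ᵥ v ∈ V) {a : n} (ha : Pi.single a 1 ∈ V) : V = ⊤ := by
  have hsingle (b : n) : (Pi.single b 1 : n → K) ∈ V := by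
    rcases eq_or_ne b a with rfl | hba
    · exact ha
    · simpa [skewSingle_mulVec_single hba] using hV _ (skewSingle_mem_so b a) _ ha
  refine eq_top_iff'.2 fun v => ?_
  rw [← Finset.univ_sum_single v]
  refine sum_mem fun i _ => ?_
  rw [← mul_one (v i), ← smul_eq_mul, Pi.single_smul]
  exact smul_mem _ _ (hsingle i)

lemma eq_bot_or_eq_top_of_so_invariant (hn : 2 < Fintype.card n) {V : Submodule K (n → K)}
    (hV : ∀ A ∈ so n K, ∀ v ∈ V, A *ᵥ v ∈ V) : V = ⊥ ∨ V = ⊤ := by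
  refine or_iff_not_imp_left.2 fun hV0 => ?_
  obtain ⟨v, hvV, hv0⟩ := (Submodule.ne_bot_iff V).1 hV0
  obtain ⟨j, hj⟩ : ∃ j, v j ≠ 0 := by
    by_contra! h
    exact hv0 (funext h)
  obtain ⟨i, -, hij⟩ := Finset.exists_mem_ne (by rw [Finset.card_univ]; omega) j
  obtain ⟨a, -, ha⟩ := Finset.exists_mem_notMem_of_card_lt_card
    ((Finset.card_le_two : ({i, j} : Finset n).card ≤ 2).trans_lt hn)
  simp only [Finset.mem_insert, Finset.mem_singleton, not_or] at ha
  -- the second rotation kills the `e_j`-component of `F_ij v = v_j e_i - v_i e_j`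
  have hrot : skewSingle a i *ᵥ (skewSingle i j *ᵥ v) = v j • Pi.single a 1 := by
    simp [skewSingle_mulVec, ha.1, ha.2, hij, ← Pi.single_smul]
  apply eq_top_of_single_mem_of_so_invariant hV (a := a)
  have := V.smul_mem (v j)⁻¹ (hV _ (skewSingle_mem_so a i) _ (hV _ (skewSingle_mem_so i j) _ hvV))
  rwa [hrot, inv_smul_smul₀ hj] at this

lemma lieSpan_skewSingle_fin_three_eq_so [NeZero (2 : K)] :
    LieSubalgebra.lieSpan K (Matrix (Fin 3) (Fin 3) K) {skewSingle 2 0, skewSingle 0 1} =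
      so (Fin 3) K := by
  refine le_antisymm (LieSubalgebra.lieSpan_le.2 ?_) fun A hA => ?_
  · rintro _ (rfl | rfl) <;> exact skewSingle_mem_so _ _
  have hA_eq : A = A 2 0 • skewSingle 2 0 + A 0 1 • skewSingle 0 1 + A 2 1 • skewSingle 2 1 := by
    ext i j
    have hij := congrFun (congrFun ((mem_so _ _ A).1 hA) i) j
    fin_cases i <;> fin_cases j <;> simp_all [skewSingle, apply_self_eq_zero_of_mem_so hA]
  have h20 : skewSingle 2 0 ∈
      LieSubalgebra.lieSpan K (Matrix (Fin 3) (Fin 3) K) {skewSingle 2 0, skewSingle 0 1} :=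
    LieSubalgebra.subset_lieSpan (Set.mem_insert _ _)
  have h01 : skewSingle 0 1 ∈
      LieSubalgebra.lieSpan K (Matrix (Fin 3) (Fin 3) K) {skewSingle 2 0, skewSingle 0 1} :=
    LieSubalgebra.subset_lieSpan (Set.mem_insert_of_mem _ rfl)
  have h21 := LieSubalgebra.lie_mem _ h20 h01
  rw [lie_skewSingle (by decide) (by decide) (by decide)] at h21
  rw [hA_eq]
  exact add_mem (add_mem (smul_mem _ _ h20) (smul_mem _ _ h01)) (smul_mem _ _ h21)

end Field

end Matrix

/-- for `L = [[0,1,0],[-1,0,0],[0,0,0]]`,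
`G = [[-1/2,0,-1],[0,-1/2,0],[1,0,0]]` and `G̃ = G - (1/2)L²`, for each standard basis
vector `e_k` of `ℂ³` the span of `{A e_k : A in the Lie subalgebra generated by G̃, L}`
is two-dimensional and equals the span of the two other standard basis vectors; in
particular the Lie algebra rank condition fails even though the QMS is irreducible. -/
theorem example_3x3_larc_fails
    (L G Gt : Matrix (Fin 3) (Fin 3) ℂ)
    (hL : L = !![0, 1, 0; -1, 0, 0; 0, 0, 0])
    (hG : G = !![-1/2, 0, -1; 0, -1/2, 0; 1, 0, 0])
    (hGt : Gt = G - (1/2 : ℂ) • (L * L)) :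
    (∀ k : Fin 3,
      Submodule.span ℂ
          {v | ∃ A ∈ LieSubalgebra.lieSpan ℂ (Matrix (Fin 3) (Fin 3) ℂ) {Gt, L},
            v = A *ᵥ Pi.single k 1}
        = Submodule.span ℂ {v | ∃ i : Fin 3, i ≠ k ∧ v = (Pi.single i 1 : Fin 3 → ℂ)} ∧
      Module.finrank ℂ
        (Submodule.span ℂ
          {v | ∃ A ∈ LieSubalgebra.lieSpan ℂ (Matrix (Fin 3) (Fin 3) ℂ) {Gt, L},
            v = A *ᵥ Pi.single k 1}) = 2) ∧
    ¬ (∀ ξ : Fin 3 → ℂ, ξ ≠ 0 →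
        Submodule.span ℂ
          {v | ∃ A ∈ LieSubalgebra.lieSpan ℂ (Matrix (Fin 3) (Fin 3) ℂ) {Gt, L},
            v = A *ᵥ ξ} = ⊤) ∧
    (∀ V : Submodule ℂ (Fin 3 → ℂ),
      (∀ v ∈ V, G *ᵥ v ∈ V) → (∀ v ∈ V, L *ᵥ v ∈ V) → V = ⊥ ∨ V = ⊤) := by
  have hso : LieSubalgebra.lieSpan ℂ (Matrix (Fin 3) (Fin 3) ℂ) {Gt, L} = so (Fin 3) ℂ := by
    have hL' : L = skewSingle 0 1 := by
      subst hL; ext i j; fin_cases i <;> fin_cases j <;> simp [skewSingle]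
    have hGt' : Gt = skewSingle 2 0 := by
      subst hGt hG hL
      ext i j; fin_cases i <;> fin_cases j <;> norm_num [skewSingle, single_apply, Fin.ext_iff]
    rw [hL', hGt', lieSpan_skewSingle_fin_three_eq_so]
  have hspan (k : Fin 3) := hso ▸ span_so_mulVec_single (K := ℂ) k
  refine ⟨fun k => ⟨?_, ?_⟩, fun hLARC => ?_, fun V hGV hLV => ?_⟩
  · rw [hspan, span_single_ne_eq_ker_proj]
  · rw [hspan, finrank_ker_proj, Fintype.card_fin]
  · have h := hLARC (Pi.single 0 1) (by simp)
    rw [hspan] at h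
    have h0 : (Pi.single 0 1 : Fin 3 → ℂ) ∈ LinearMap.ker (LinearMap.proj 0) := h ▸ mem_top
    simp at h0
  · have hGtV : Gt ∈ mulVecStabilizer V := by
      rw [hGt]
      exact sub_mem (show G ∈ mulVecStabilizer V from hGV)
        (Subalgebra.smul_mem _ (mul_mem (show L ∈ mulVecStabilizer V from hLV) hLV) _)
    refine eq_bot_or_eq_top_of_so_invariant (by simp) fun A hA => ?_
    refine mulVec_mem_of_mem_lieSpan ?_ (hso ▸ hA)
    rintro _ (rfl | rfl)
    exacts [hGtV, hLV]
end
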